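/- Suppose C^∞ ∩ A⁻¹(D^∞) = {0}. Let r_C = 2 if C is convex and r_C = 1 otherwise, and let L > ‖A‖²/r_C. Let x⁰ ∈ C and let {x^t} be any sequence such that for every t ≥ 0 there exists η^t ∈ Proj_D(Ax^t) with x^{t+1} ∈ Proj_C(x^t − Aᵀ(Ax^t − η^t)/L) (the fixed-stepsize algorithm SpFeas_DC). Then every accumulation point x* of {x^t} is a stationary point of the split feasibility problem: x* ∈ C and there exists η* ∈ Proj_D(Ax*) with Aᵀ(η* − Ax*) ∈ N_C(x*). -/

import Mathlib

/-! The projected-gradient step gives, by the three-point inequality for the projection onto `C`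
(which improves by a factor `2` when `C` is convex), the sufficient decrease
`½ d(Ax⁺, D)² + ½ (r_C L - ‖A‖²) ‖x⁺ - x‖² ≤ ½ d(Ax, D)²`, so the steps are square-summable and
`x^{t+1} - x^t → 0`. Along a subsequence with `x^t → x*`, the projections `η^t` are bounded and
accumulate at some `η* ∈ Proj_D(Ax*)`, while the proximal normals
`L (x^t - L⁻¹ Aᵀ(Ax^t - η^t) - x^{t+1}) ∈ N̂_C(x^{t+1})` converge to `Aᵀ(η* - Ax*)`. -/

open Filter Topology Metric
open scoped RealInnerProductSpace

noncomputable section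

/-- The set of projections of `y` onto `S`. -/
def projSet {E : Type*} [NormedAddCommGroup E] (S : Set E) (y : E) : Set E :=
  {z | z ∈ S ∧ dist y z = Metric.infDist y S}

/-- The horizon cone of `S`. -/
def horizonCone {E : Type*} [NormedAddCommGroup E] [NormedSpace ℝ E] (S : Set E) : Set E :=
  {x | ∃ (u : ℕ → E) (β : ℕ → ℝ), (∀ t, u t ∈ S) ∧ (∀ t, 0 < β t) ∧
    Tendsto β atTop (𝓝 (0 : ℝ)) ∧ Tendsto (fun t => β t • u t) atTop (𝓝 x)}

/-- The regular (Fréchet) normal cone to `S` at `x`. -/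
def regNormalCone {E : Type*} [NormedAddCommGroup E] [InnerProductSpace ℝ E]
    (S : Set E) (x : E) : Set E :=
  {v | x ∈ S ∧ ∀ ε > 0, ∃ δ > 0, ∀ u ∈ S, ‖u - x‖ < δ → ⟪v, u - x⟫ ≤ ε * ‖u - x‖}

/-- The limiting normal cone to `S` at `x`. -/
def normalCone {E : Type*} [NormedAddCommGroup E] [InnerProductSpace ℝ E]
    (S : Set E) (x : E) : Set E :=
  {v | x ∈ S ∧ ∃ (xs vs : ℕ → E), (∀ t, vs t ∈ regNormalCone S (xs t)) ∧
    Tendsto xs atTop (𝓝 x) ∧ Tendsto vs atTop (𝓝 v)}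

/-- The regular (Fréchet) subdifferential at `x` of the function `φ + δ_C`
(the real-valued function `φ` plus the indicator of `C`). -/
def regSubdiff {E : Type*} [NormedAddCommGroup E] [InnerProductSpace ℝ E]
    (φ : E → ℝ) (C : Set E) (x : E) : Set E :=
  {v | x ∈ C ∧ ∀ ε > 0, ∃ δ > 0, ∀ u ∈ C, ‖u - x‖ < δ →
      φ u - φ x - ⟪v, u - x⟫ ≥ -(ε * ‖u - x‖)}

/-- The limiting subdifferential at `x` of the function `φ + δ_C`. -/
def limSubdiff {E : Type*} [NormedAddCommGroup E] [InnerProductSpace ℝ E]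
    (φ : E → ℝ) (C : Set E) (x : E) : Set E :=
  {v | x ∈ C ∧ ∃ (xs vs : ℕ → E), (∀ t, vs t ∈ regSubdiff φ C (xs t)) ∧
    Tendsto xs atTop (𝓝 x) ∧ Tendsto (fun t => φ (xs t)) atTop (𝓝 (φ x)) ∧
    Tendsto vs atTop (𝓝 v)}

/-- The smooth part `x ↦ ½ d(Ax, D)²` of the split-feasibility objective
`F = ½ d(A·, D)² + δ_C`. -/
def phiF {n m : ℕ} (A : EuclideanSpace ℝ (Fin n) →L[ℝ] EuclideanSpace ℝ (Fin m))
    (D : Set (EuclideanSpace ℝ (Fin m))) (x : EuclideanSpace ℝ (Fin n)) : ℝ :=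
  Metric.infDist (A x) D ^ 2 / 2

/-- A polyhedral set: an intersection of finitely many closed half-spaces. -/
def IsPolyhedral {E : Type*} [NormedAddCommGroup E] [InnerProductSpace ℝ E] (S : Set E) : Prop :=
  ∃ (k : ℕ) (a : Fin k → E) (b : Fin k → ℝ), S = {x | ∀ i, ⟪a i, x⟫ ≤ b i}

end

section Projection

variable {E : Type*} [NormedAddCommGroup E] [InnerProductSpace ℝ E] {C : Set E} {x y p : E}

theorem two_inner_le_sq_norm_of_mem_projSet (hp : p ∈ projSet C y) (hx : x ∈ C) :
    2 * ⟪y - p, x - p⟫ ≤ ‖x - p‖ ^ 2 := by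
  have hle : ‖y - p‖ ≤ ‖y - x‖ := by
    rw [← dist_eq_norm, ← dist_eq_norm, hp.2]
    exact infDist_le_dist_of_mem hx
  have hsq : ‖y - p‖ ^ 2 ≤ ‖y - x‖ ^ 2 := pow_le_pow_left₀ (norm_nonneg _) hle 2
  rw [show y - x = (y - p) - (x - p) by abel, norm_sub_sq_real (y - p)] at hsq
  linarith

theorem inner_nonpos_of_mem_projSet_of_convex (hC : Convex ℝ C) (hp : p ∈ projSet C y)
    (hx : x ∈ C) : ⟪y - p, x - p⟫ ≤ 0 := by
  have hmin : ‖y - p‖ = ⨅ w : C, ‖y - w‖ := by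
    simpa only [dist_eq_norm, infDist_eq_iInf] using hp.2
  exact (norm_eq_iInf_iff_real_inner_le_zero hC hp.1).mp hmin x hx

theorem mul_sq_norm_sub_le_two_inner_of_mem_projSet {r : ℝ} (hr : (Convex ℝ C ∧ r = 2) ∨ r = 1)
    (hp : p ∈ projSet C y) (hx : x ∈ C) : r * ‖p - x‖ ^ 2 ≤ 2 * ⟪y - x, p - x⟫ := by
  have hsplit : ⟪y - x, p - x⟫ = ‖p - x‖ ^ 2 - ⟪y - p, x - p⟫ := by
    rw [show y - x = (y - p) + (p - x) by abel, inner_add_left, real_inner_self_eq_norm_sq,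
      show p - x = -(x - p) by abel, inner_neg_right, norm_neg]
    ring
  rcases hr with ⟨hC, rfl⟩ | rfl
  · linarith [inner_nonpos_of_mem_projSet_of_convex hC hp hx]
  · have := two_inner_le_sq_norm_of_mem_projSet hp hx
    rw [← norm_neg (x - p), neg_sub] at this
    linarith

theorem smul_sub_mem_regNormalCone_of_mem_projSet (hp : p ∈ projSet C y) {L : ℝ} (hL : 0 < L) :
    L • (y - p) ∈ regNormalCone C p := by
  refine ⟨hp.1, fun ε hε => ⟨2 * ε / L, by positivity, fun u hu hd => ?_⟩⟩
  have hprox := two_inner_le_sq_norm_of_mem_projSet hp hu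
  have hLd : L * ‖u - p‖ < 2 * ε := by rwa [lt_div_iff₀' hL] at hd
  rw [real_inner_smul_left]
  nlinarith [norm_nonneg (u - p)]

end Projection

section Descent

variable {E F : Type*} [NormedAddCommGroup E] [InnerProductSpace ℝ E] [CompleteSpace E]
  [NormedAddCommGroup F] [InnerProductSpace ℝ F] [CompleteSpace F]
  {A : E →L[ℝ] F} {C : Set E} {D : Set F} {x x' : E} {η : F}

/-- Descent lemma for `½ d(A·, D)²`, which need not be differentiable: the role of the gradient
is played by `Aᵀ(Ax - η)` for any projection `η` of `Ax` onto `D`. -/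
theorem infDist_sq_le_of_mem_projSet (hη : η ∈ projSet D (A x)) (x' : E) :
    infDist (A x') D ^ 2 ≤ infDist (A x) D ^ 2
      + 2 * ⟪ContinuousLinearMap.adjoint A (A x - η), x' - x⟫ + ‖A‖ ^ 2 * ‖x' - x‖ ^ 2 := by
  have hle : infDist (A x') D ≤ ‖(A x - η) + A (x' - x)‖ := by
    rw [map_sub, show A x - η + (A x' - A x) = A x' - η by abel, ← dist_eq_norm]
    exact infDist_le_dist_of_mem hη.1
  have hAle : ‖A (x' - x)‖ ^ 2 ≤ ‖A‖ ^ 2 * ‖x' - x‖ ^ 2 := by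
    rw [← mul_pow]
    exact pow_le_pow_left₀ (norm_nonneg _) (A.le_opNorm _) 2
  have hproj : ‖A x - η‖ = infDist (A x) D := by rw [← dist_eq_norm, hη.2]
  calc infDist (A x') D ^ 2 ≤ ‖(A x - η) + A (x' - x)‖ ^ 2 :=
        pow_le_pow_left₀ infDist_nonneg hle 2
    _ = infDist (A x) D ^ 2 + 2 * ⟪ContinuousLinearMap.adjoint A (A x - η), x' - x⟫
          + ‖A (x' - x)‖ ^ 2 := by
        rw [norm_add_sq_real, hproj, ContinuousLinearMap.adjoint_inner_left]
    _ ≤ _ := by gcongr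

theorem infDist_sq_add_le_of_mem_projSet {r L : ℝ} (hr : (Convex ℝ C ∧ r = 2) ∨ r = 1)
    (hL : 0 < L) (hx : x ∈ C) (hη : η ∈ projSet D (A x))
    (hx' : x' ∈ projSet C (x - L⁻¹ • ContinuousLinearMap.adjoint A (A x - η))) :
    infDist (A x') D ^ 2 / 2 + (r * L - ‖A‖ ^ 2) / 2 * ‖x' - x‖ ^ 2 ≤ infDist (A x) D ^ 2 / 2 := by
  set g := ContinuousLinearMap.adjoint A (A x - η)
  have hstep := mul_sq_norm_sub_le_two_inner_of_mem_projSet hr hx' hx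
  rw [sub_sub_cancel_left, inner_neg_left, real_inner_smul_left] at hstep
  have hslope : r * L * ‖x' - x‖ ^ 2 ≤ -(2 * ⟪g, x' - x⟫) := by
    have := mul_le_mul_of_nonneg_left hstep hL.le
    field_simp at this
    linarith
  linarith [infDist_sq_le_of_mem_projSet hη x']

end Descent

theorem summable_of_add_le {u v : ℕ → ℝ} (hu : ∀ t, 0 ≤ u t) (hv : ∀ t, 0 ≤ v t)
    (h : ∀ t, u (t + 1) + v t ≤ u t) : Summable v := by
  have htel : ∀ T, ∑ i ∈ Finset.range T, v i + u T ≤ u 0 := by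
    intro T
    induction T with
    | zero => simp
    | succ T ih => rw [Finset.sum_range_succ]; linarith [h T]
  exact summable_of_sum_range_le hv fun T => by linarith [htel T, hu T]

theorem tendsto_sub_nhds_zero_of_add_sq_norm_le {E : Type*} [NormedAddCommGroup E]
    {x : ℕ → E} {φ : ℕ → ℝ} {c : ℝ} (hc : 0 < c) (hφ : ∀ t, 0 ≤ φ t)
    (h : ∀ t, φ (t + 1) + c * ‖x (t + 1) - x t‖ ^ 2 ≤ φ t) :
    Tendsto (fun t => x (t + 1) - x t) atTop (𝓝 0) := by
  have hsum : Summable fun t => c * ‖x (t + 1) - x t‖ ^ 2 :=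
    summable_of_add_le hφ (fun t => by positivity) h
  have hsq : Tendsto (fun t => ‖x (t + 1) - x t‖ ^ 2) atTop (𝓝 0) := by
    simpa [hc.ne'] using (hsum.tendsto_atTop_zero).const_mul c⁻¹
  rw [tendsto_zero_iff_norm_tendsto_zero]
  simpa [Real.sqrt_sq (norm_nonneg _)] using hsq.sqrt

/-- Outer semicontinuity of the projection onto a closed set of a proper space. -/
theorem exists_subseq_tendsto_mem_projSet {F : Type*} [NormedAddCommGroup F] [ProperSpace F]
    {D : Set F} (hD : IsClosed D) {y : ℕ → F} {y₀ : F} (hy : Tendsto y atTop (𝓝 y₀))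
    {η : ℕ → F} (hη : ∀ t, η t ∈ projSet D (y t)) :
    ∃ η₀ ∈ projSet D y₀, ∃ τ : ℕ → ℕ, StrictMono τ ∧ Tendsto (η ∘ τ) atTop (𝓝 η₀) := by
  have hdist : Tendsto (fun t => infDist (y t) D + dist (y t) y₀) atTop
      (𝓝 (infDist y₀ D + dist y₀ y₀)) :=
    ((continuous_infDist_pt D).tendsto y₀ |>.comp hy).add (hy.dist tendsto_const_nhds)
  obtain ⟨R, hR⟩ := hdist.bddAbove_range
  have hball : ∀ t, η t ∈ closedBall y₀ R := fun t => by
    rw [mem_closedBall]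
    calc dist (η t) y₀ ≤ dist (y t) (η t) + dist (y t) y₀ := dist_triangle_left _ _ _
      _ = infDist (y t) D + dist (y t) y₀ := by rw [(hη t).2]
      _ ≤ R := hR ⟨t, rfl⟩
  obtain ⟨η₀, -, τ, hτ, hητ⟩ := tendsto_subseq_of_bounded isBounded_closedBall hball
  have hyτ := hy.comp hτ.tendsto_atTop
  refine ⟨η₀, ⟨hD.mem_of_tendsto hητ (Eventually.of_forall fun t => (hη _).1), ?_⟩, τ, hτ, hητ⟩
  refine tendsto_nhds_unique (hyτ.dist hητ) ?_
  simp only [Function.comp_def, (hη _).2]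
  exact (continuous_infDist_pt D).tendsto y₀ |>.comp hyτ

theorem neg_mem_normalCone_of_tendsto_projSet {E : Type*} [NormedAddCommGroup E]
    [InnerProductSpace ℝ E] {C : Set E} (hC : IsClosed C) {L : ℝ} (hL : 0 < L)
    {x x' g : ℕ → E} {z g₀ : E} (hx' : ∀ t, x' t ∈ projSet C (x t - L⁻¹ • g t))
    (hx : Tendsto x atTop (𝓝 z)) (hx'z : Tendsto x' atTop (𝓝 z)) (hg : Tendsto g atTop (𝓝 g₀)) :
    -g₀ ∈ normalCone C z := by
  refine ⟨hC.mem_of_tendsto hx'z (Eventually.of_forall fun t => (hx' t).1), x',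
    fun t => L • (x t - L⁻¹ • g t - x' t),
    fun t => smul_sub_mem_regNormalCone_of_mem_projSet (hx' t) hL, hx'z, ?_⟩
  have hrw : ∀ t, L • (x t - L⁻¹ • g t - x' t) = L • (x t - x' t) - g t := fun t => by
    rw [sub_right_comm, smul_sub, smul_inv_smul₀ hL.ne']
  simp only [hrw]
  simpa using ((hx.sub hx'z).const_smul L).sub hg

theorem stmt_8_general (n m : ℕ)
    (A : EuclideanSpace ℝ (Fin n) →L[ℝ] EuclideanSpace ℝ (Fin m))
    (C : Set (EuclideanSpace ℝ (Fin n))) (D : Set (EuclideanSpace ℝ (Fin m)))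
    (hCcl : IsClosed C) (hDcl : IsClosed D)
    (rC L : ℝ) (hrC : (Convex ℝ C ∧ rC = 2) ∨ (¬ Convex ℝ C ∧ rC = 1))
    (hL : ‖A‖ ^ 2 / rC < L)
    (x : ℕ → EuclideanSpace ℝ (Fin n)) (hx0 : x 0 ∈ C)
    (hstep : ∀ t : ℕ, ∃ η ∈ projSet D (A (x t)),
      x (t + 1) ∈ projSet C (x t - L⁻¹ • ((ContinuousLinearMap.adjoint A) (A (x t) - η)))) :
    ∀ xstar : EuclideanSpace ℝ (Fin n),
      (∃ σ : ℕ → ℕ, StrictMono σ ∧ Tendsto (fun t => x (σ t)) atTop (𝓝 xstar)) →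
      xstar ∈ C ∧ ∃ ηstar ∈ projSet D (A xstar),
        (ContinuousLinearMap.adjoint A) (ηstar - A xstar) ∈ normalCone C xstar := by
  choose η hη hx' using hstep
  have hxC : ∀ t, x t ∈ C := fun t => t.casesOn hx0 fun t => (hx' t).1
  have hr : (Convex ℝ C ∧ rC = 2) ∨ rC = 1 := hrC.imp_right And.right
  have hrpos : 0 < rC := by rcases hr with ⟨-, rfl⟩ | rfl <;> norm_num
  have hLpos : 0 < L := (div_nonneg (sq_nonneg _) hrpos.le).trans_lt hL
  have hc : 0 < (rC * L - ‖A‖ ^ 2) / 2 := by rw [div_lt_iff₀' hrpos] at hL; linarith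
  have hΔ : Tendsto (fun t => x (t + 1) - x t) atTop (𝓝 0) :=
    tendsto_sub_nhds_zero_of_add_sq_norm_le (φ := fun t => infDist (A (x t)) D ^ 2 / 2) hc
      (fun t => by positivity) fun t => infDist_sq_add_le_of_mem_projSet hr hLpos (hxC t) (hη t) (hx' t)
  rintro z ⟨σ, hσ, hxσ⟩
  obtain ⟨η₀, hη₀, τ, hτ, hητ⟩ :=
    exists_subseq_tendsto_mem_projSet hDcl ((A.continuous.tendsto z).comp hxσ) fun t => hη (σ t)
  have hστ : StrictMono (σ ∘ τ) := hσ.comp hτ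
  have hxστ : Tendsto (fun t => x (σ (τ t))) atTop (𝓝 z) := hxσ.comp hτ.tendsto_atTop
  have hxστ' : Tendsto (fun t => x (σ (τ t) + 1)) atTop (𝓝 z) := by
    simpa using hxστ.add (hΔ.comp hστ.tendsto_atTop)
  have hg : Tendsto (fun t => ContinuousLinearMap.adjoint A (A (x (σ (τ t))) - η (σ (τ t))))
      atTop (𝓝 (ContinuousLinearMap.adjoint A (A z - η₀))) :=
    (ContinuousLinearMap.adjoint A).continuous.tendsto _ |>.comp
      (((A.continuous.tendsto z).comp hxστ).sub hητ)
  have hnormal := neg_mem_normalCone_of_tendsto_projSet hCcl hLpos (fun t => hx' (σ (τ t)))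
    hxστ hxστ' hg
  rw [← map_neg, neg_sub] at hnormal
  exact ⟨hnormal.1, η₀, hη₀, hnormal⟩

/-- Under the horizon-cone condition, every accumulation point `x*` of the
sequence generated by `SpFeas_DC` is a stationary point of the split feasibility problem:
`x* ∈ C` and `Aᵀ(η* − Ax*) ∈ N_C(x*)` for some `η* ∈ Proj_D(Ax*)`. -/
theorem stmt_8 (n m : ℕ)
    (A : EuclideanSpace ℝ (Fin n) →L[ℝ] EuclideanSpace ℝ (Fin m))
    (C : Set (EuclideanSpace ℝ (Fin n))) (D : Set (EuclideanSpace ℝ (Fin m)))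
    (hCne : C.Nonempty) (hCcl : IsClosed C) (hDne : D.Nonempty) (hDcl : IsClosed D)
    (hhor : ∀ z, z ∈ horizonCone C → A z ∈ horizonCone D → z = 0)
    (rC L : ℝ) (hrC : (Convex ℝ C ∧ rC = 2) ∨ (¬ Convex ℝ C ∧ rC = 1))
    (hL : ‖A‖ ^ 2 / rC < L)
    (x : ℕ → EuclideanSpace ℝ (Fin n)) (hx0 : x 0 ∈ C)
    (hstep : ∀ t : ℕ, ∃ η ∈ projSet D (A (x t)),
      x (t + 1) ∈ projSet C (x t - L⁻¹ • ((ContinuousLinearMap.adjoint A) (A (x t) - η)))) :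
    ∀ xstar : EuclideanSpace ℝ (Fin n),
      (∃ σ : ℕ → ℕ, StrictMono σ ∧ Tendsto (fun t => x (σ t)) atTop (𝓝 xstar)) →
      xstar ∈ C ∧ ∃ ηstar ∈ projSet D (A xstar),
        (ContinuousLinearMap.adjoint A) (ηstar - A xstar) ∈ normalCone C xstar :=
  stmt_8_general n m A C D hCcl hDcl rC L hrC hL x hx0 hstep
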